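/- arXiv:2502.14766 — 2 statements merged into one kernel-verified Lean document; each statement's English description precedes it below -/
import Mathlib

section
/- Let T > 0 and let k_y ∈ ℝ, L_f > 0, L_v ≥ 0 satisfy k_y + L_f ≥ 0. Then there exists a constant C > 0, depending only on k_y, L_f, L_v and T, with the following property: for every integer N ≥ 1, setting h := T/N, if h·(2k_y + 2L_f) ≤ 1/2, then for any two solutions (Y¹, Z¹) with drivers (f¹_n) and (Y², Z²) with drivers (f²_n) of the generic discrete scheme whose driver differences satisfy the driver-difference assumption with parameters k_y, L_f, L_v and nonnegative reals (ε_n)_{0≤n<N}, one has max_{0≤n≤N} E[(δY_n)²] + Σ_{n=0}^{N−1} h·E[|δZ_n|²] ≤ C·( E[(δY_N)²] + max_{0≤n<N} ε_n ). -/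
open MeasureTheory Finset

noncomputable section

/-- The Brownian-type increments `ΔW_n : Ω → ℝ^d` are `𝒢_{n+1}`-measurable, have
square-integrable components, conditional mean zero and conditional covariance `h·I`. -/
def IncrementsOK {Ω : Type} [MeasurableSpace Ω] (P : Measure Ω) (N d : ℕ) (h : ℝ)
    (𝒢 : Filtration ℕ (inferInstance : MeasurableSpace Ω))
    (ΔW : ℕ → Ω → Fin d → ℝ) : Prop :=
  ∀ n < N,
    (∀ i, StronglyMeasurable[𝒢 (n + 1)] (fun ω => ΔW n ω i)) ∧
    (∀ i, MemLp (fun ω => ΔW n ω i) 2 P) ∧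
    (∀ i, P[(fun ω => ΔW n ω i) | 𝒢 n] =ᵐ[P] 0) ∧
    (∀ i j, P[(fun ω => ΔW n ω i * ΔW n ω j) | 𝒢 n]
        =ᵐ[P] fun _ => if i = j then h else 0)

/-- `(Y, Z)` solves the generic discrete scheme with driver terms `f`:
each `Y_n` is square-integrable and `𝒢_n`-measurable, each `f_n` is square-integrable and
`𝒢_n`-measurable, and almost surely `Y_n = E[Y_{n+1} | 𝒢_n] + h·f_n` and
`Z_nⁱ = h⁻¹·E[Y_{n+1}·ΔW_nⁱ | 𝒢_n]` for all `n < N`. -/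
def SolvesScheme {Ω : Type} [MeasurableSpace Ω] (P : Measure Ω) (N d : ℕ) (h : ℝ)
    (𝒢 : Filtration ℕ (inferInstance : MeasurableSpace Ω))
    (ΔW : ℕ → Ω → Fin d → ℝ)
    (Y : ℕ → Ω → ℝ) (Z : ℕ → Ω → Fin d → ℝ) (f : ℕ → Ω → ℝ) : Prop :=
  (∀ n ≤ N, MemLp (Y n) 2 P) ∧
  (∀ n ≤ N, StronglyMeasurable[𝒢 n] (Y n)) ∧
  (∀ n < N, MemLp (f n) 2 P) ∧
  (∀ n < N, StronglyMeasurable[𝒢 n] (f n)) ∧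
  (∀ n < N, Y n =ᵐ[P] fun ω => (P[Y (n + 1) | 𝒢 n]) ω + h * f n ω) ∧
  (∀ n < N, ∀ i, (fun ω => Z n ω i)
      =ᵐ[P] fun ω => h⁻¹ * (P[(fun ω' => Y (n + 1) ω' * ΔW n ω' i) | 𝒢 n]) ω)

/-- The driver-difference assumption with parameters `k_y, L_f, L_v` and nonnegative
reals `ε_n`: for each `n < N` the difference of the drivers splits as `φ_n + ψ_n` with
`E[φ_n·δY_n] ≤ k_y·E[(δY_n)²]` and `E[ψ_n²] ≤ L_v·ε_n + L_f·E[|δZ_n|²]`. -/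
def DriverDiff {Ω : Type} [MeasurableSpace Ω] (P : Measure Ω) (N d : ℕ)
    (𝒢 : Filtration ℕ (inferInstance : MeasurableSpace Ω))
    (k_y L_f L_v : ℝ) (ε : ℕ → ℝ)
    (Y1 Y2 : ℕ → Ω → ℝ) (Z1 Z2 : ℕ → Ω → Fin d → ℝ) (f1 f2 : ℕ → Ω → ℝ) : Prop :=
  ∀ n < N, ∃ φ ψ : Ω → ℝ,
    StronglyMeasurable[𝒢 n] φ ∧ StronglyMeasurable[𝒢 n] ψ ∧
    MemLp φ 2 P ∧ MemLp ψ 2 P ∧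
    (fun ω => f1 n ω - f2 n ω) =ᵐ[P] (fun ω => φ ω + ψ ω) ∧
    (∫ ω, φ ω * (Y1 n ω - Y2 n ω) ∂P) ≤ k_y * ∫ ω, (Y1 n ω - Y2 n ω) ^ 2 ∂P ∧
    (∫ ω, (ψ ω) ^ 2 ∂P)
      ≤ L_v * ε n + L_f * ∫ ω, (∑ i, (Z1 n ω i - Z2 n ω i) ^ 2) ∂P

/-!
Subtracting the two schemes gives a solution of the scheme for the differences `δY, δZ` with
driver `δf`. Testing `δY_{n+1} - E[δY_{n+1} | 𝒢_n]` against bounded `𝒢_n`-measurable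
combinations `∑ bᵢ ΔWⁱ_n`, whose second moment is `h ∑ E[bᵢ²]` by the conditional covariance,
gives the Bessel-type inequality `h E|δZ_n|² ≤ E[δY_{n+1}²] - E[E[δY_{n+1} | 𝒢_n]²]`
(for truncations of `δZ_n` first, then by monotone convergence). Since
`E[δY_{n+1} | 𝒢_n] = δY_n - h δf_n`, the splitting `δf_n = φ_n + ψ_n` and Young's inequality turn
this into
`E[δY_n²] + (h/2) E|δZ_n|² ≤ E[δY_{n+1}²] + h (2k_y + 2L_f) E[δY_n²] + (L_v / (2L_f)) h ε_n`.
A backward discrete Gronwall argument, with `β = 2k_y + 2L_f` and `(1 + 2hβ)^N ≤ exp (2βT)`,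
bounds `max_n E[δY_n²]`, and summing the same inequality over `n` bounds `∑ h E|δZ_n|²`.
-/

open Filter Topology

section Truncation

variable {M : ℝ}

lemma abs_max_neg_min_le (hM : 0 ≤ M) (x : ℝ) : |max (-M) (min x M)| ≤ M :=
  abs_le.mpr ⟨le_max_left _ _, max_le (by linarith) (min_le_right _ _)⟩

lemma sq_max_neg_min_le_mul (hM : 0 ≤ M) (x : ℝ) :
    max (-M) (min x M) ^ 2 ≤ max (-M) (min x M) * x := by
  rcases le_total x (-M) with h1 | h1
  · rw [min_eq_left (h1.trans (by linarith)), max_eq_left h1]; nlinarith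
  rcases le_total x M with h2 | h2
  · rw [min_eq_left h2, max_eq_right h1]; nlinarith
  · rw [min_eq_right h2, max_eq_right (by linarith)]; nlinarith

lemma sq_max_neg_min (hM : 0 ≤ M) (x : ℝ) : max (-M) (min x M) ^ 2 = min (x ^ 2) (M ^ 2) := by
  rcases le_total x (-M) with h1 | h1
  · rw [min_eq_left (h1.trans (by linarith)), max_eq_left h1, min_eq_right (by nlinarith)]
    ring
  rcases le_total x M with h2 | h2
  · rw [min_eq_left h2, max_eq_right h1, min_eq_left (by nlinarith)]
  · rw [min_eq_right h2, max_eq_right (by linarith), min_eq_right (by nlinarith)]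

end Truncation

lemma mul_le_young {L : ℝ} (hL : 0 < L) (a b : ℝ) : a * b ≤ L * a ^ 2 + (4 * L)⁻¹ * b ^ 2 := by
  have hsq : 0 ≤ (4 * L)⁻¹ * (2 * L * a - b) ^ 2 := by positivity
  have hexp : (4 * L)⁻¹ * (2 * L * a - b) ^ 2 = L * a ^ 2 - a * b + (4 * L)⁻¹ * b ^ 2 := by
    field_simp
    ring
  linarith

lemma integral_le_of_tendsto_of_monotone {α : Type*} {mα : MeasurableSpace α} {μ : Measure α}
    {f : ℕ → α → ℝ} {F : α → ℝ} {B : ℝ} (hf : ∀ n, Integrable (f n) μ)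
    (h_mono : ∀ᵐ x ∂μ, Monotone fun n => f n x)
    (h_tendsto : ∀ᵐ x ∂μ, Tendsto (fun n => f n x) atTop (𝓝 (F x)))
    (hB : 0 ≤ B) (hfB : ∀ n, ∫ x, f n x ∂μ ≤ B) : ∫ x, F x ∂μ ≤ B := by
  by_cases hF : Integrable F μ
  · exact le_of_tendsto' (integral_tendsto_of_tendsto_of_monotone hf hF h_mono h_tendsto) hfB
  · rw [integral_undef hF]
    exact hB

section SquareIntegrable

variable {Ω : Type*} {m m0 : MeasurableSpace Ω} {P : Measure Ω}

lemma integral_sub_sq {a b : Ω → ℝ} (ha : MemLp a 2 P) (hb : MemLp b 2 P) :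
    ∫ ω, (a ω - b ω) ^ 2 ∂P
      = ∫ ω, a ω ^ 2 ∂P - 2 * ∫ ω, a ω * b ω ∂P + ∫ ω, b ω ^ 2 ∂P := by
  have hab : Integrable (fun ω => 2 * (a ω * b ω)) P := (ha.integrable_mul hb).const_mul 2
  have hsub : Integrable (fun ω => a ω ^ 2 - 2 * (a ω * b ω)) P := ha.integrable_sq.sub hab
  calc ∫ ω, (a ω - b ω) ^ 2 ∂P = ∫ ω, (a ω ^ 2 - 2 * (a ω * b ω) + b ω ^ 2) ∂P :=
        integral_congr_ae (ae_of_all _ fun ω => by ring)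
    _ = _ := by
        rw [integral_add hsub hb.integrable_sq,
          integral_sub ha.integrable_sq hab, integral_const_mul]

lemma integral_mul_condExp [IsFiniteMeasure P] (hm : m ≤ m0) {b X : Ω → ℝ}
    (hb : StronglyMeasurable[m] b) (hbX : Integrable (b * X) P) (hX : Integrable X P) :
    ∫ ω, b ω * P[X|m] ω ∂P = ∫ ω, b ω * X ω ∂P :=
  calc ∫ ω, b ω * P[X|m] ω ∂P = ∫ ω, P[b * X|m] ω ∂P :=
        integral_congr_ae (condExp_mul_of_stronglyMeasurable_left hb hbX hX).symm
    _ = ∫ ω, b ω * X ω ∂P := integral_condExp hm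

lemma integral_sq_sub_condExp [IsFiniteMeasure P] (hm : m ≤ m0) {U : Ω → ℝ}
    (hU : MemLp U 2 P) :
    ∫ ω, (U ω - P[U|m] ω) ^ 2 ∂P = ∫ ω, U ω ^ 2 ∂P - ∫ ω, P[U|m] ω ^ 2 ∂P := by
  have hG : MemLp (P[U|m]) 2 P := hU.condExp one_le_two
  have hUG : ∫ ω, U ω * P[U|m] ω ∂P = ∫ ω, P[U|m] ω ^ 2 ∂P :=
    calc ∫ ω, U ω * P[U|m] ω ∂P = ∫ ω, P[U|m] ω * U ω ∂P := by simp only [mul_comm]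
      _ = ∫ ω, P[U|m] ω * P[U|m] ω ∂P := (integral_mul_condExp hm stronglyMeasurable_condExp
            (hG.integrable_mul hU) (hU.integrable one_le_two)).symm
      _ = ∫ ω, P[U|m] ω ^ 2 ∂P := by simp only [sq]
  rw [integral_sub_sq hU hG, hUG]
  ring

lemma memLp_mul_of_bound {b X : Ω → ℝ} {M : ℝ} (hb : AEStronglyMeasurable b P)
    (hbM : ∀ ω, |b ω| ≤ M) (hX : MemLp X 2 P) : MemLp (fun ω => b ω * X ω) 2 P :=
  hX.mul' (memLp_top_of_bound hb M (ae_of_all _ hbM))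

lemma integral_mul_le_of_ae_eq_add {y F φ ψ : Ω → ℝ} (hy : MemLp y 2 P) (hφ : MemLp φ 2 P)
    (hψ : MemLp ψ 2 P) (hF : F =ᵐ[P] fun ω => φ ω + ψ ω) {k L : ℝ} (hL : 0 < L)
    (hφy : ∫ ω, φ ω * y ω ∂P ≤ k * ∫ ω, y ω ^ 2 ∂P) :
    ∫ ω, y ω * F ω ∂P ≤ (k + L) * ∫ ω, y ω ^ 2 ∂P + (4 * L)⁻¹ * ∫ ω, ψ ω ^ 2 ∂P := by
  have hsplit : ∫ ω, y ω * F ω ∂P = ∫ ω, φ ω * y ω ∂P + ∫ ω, y ω * ψ ω ∂P := by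
    rw [← integral_add (f := fun ω => φ ω * y ω) (g := fun ω => y ω * ψ ω)
      (hφ.integrable_mul hy) (hy.integrable_mul hψ)]
    refine integral_congr_ae ?_
    filter_upwards [hF] with ω hω
    simp only [hω]
    ring
  have hyoung : ∫ ω, y ω * ψ ω ∂P ≤ L * ∫ ω, y ω ^ 2 ∂P + (4 * L)⁻¹ * ∫ ω, ψ ω ^ 2 ∂P := by
    rw [← integral_const_mul, ← integral_const_mul, ← integral_add
      (hy.integrable_sq.const_mul L) (hψ.integrable_sq.const_mul _)]
    exact integral_mono (hy.integrable_mul hψ)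
      ((hy.integrable_sq.const_mul L).add (hψ.integrable_sq.const_mul _))
      fun ω => mul_le_young hL (y ω) (ψ ω)
  linarith

end SquareIntegrable

structure IsCondIsotropicIncrement {Ω ι : Type*} [DecidableEq ι] {m0 : MeasurableSpace Ω}
    (m : MeasurableSpace Ω) (P : @Measure Ω m0) (h : ℝ) (W : Ω → ι → ℝ) : Prop where
  memLp : ∀ i, MemLp (fun ω => W ω i) 2 P
  condExp_eq_zero : ∀ i, P[fun ω => W ω i|m] =ᵐ[P] 0
  condExp_mul : ∀ i j, P[fun ω => W ω i * W ω j|m] =ᵐ[P] fun _ => if i = j then h else 0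

namespace IsCondIsotropicIncrement

variable {Ω ι : Type*} [DecidableEq ι] {m m0 : MeasurableSpace Ω} {P : Measure Ω}
  [IsFiniteMeasure P] {h : ℝ} {W : Ω → ι → ℝ}

lemma integral_mul_eq_zero (hW : IsCondIsotropicIncrement m P h W) (hm : m ≤ m0) {c : Ω → ℝ}
    (hc : StronglyMeasurable[m] c) (i : ι) (hcW : Integrable (fun ω => c ω * W ω i) P) :
    ∫ ω, c ω * W ω i ∂P = 0 := by
  rw [← integral_mul_condExp hm hc hcW ((hW.memLp i).integrable one_le_two)]
  refine (integral_congr_ae ?_).trans (integral_zero Ω ℝ)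
  filter_upwards [hW.condExp_eq_zero i] with ω hω
  simp [hω]

lemma integral_sum_mul_sq [Fintype ι] (hW : IsCondIsotropicIncrement m P h W) (hm : m ≤ m0)
    {b : ι → Ω → ℝ} {M : ℝ} (hb : ∀ i, StronglyMeasurable[m] (b i))
    (hbM : ∀ i ω, |b i ω| ≤ M) :
    ∫ ω, (∑ i, b i ω * W ω i) ^ 2 ∂P = h * ∑ i, ∫ ω, b i ω ^ 2 ∂P := by
  have hbW : ∀ i, MemLp (fun ω => b i ω * W ω i) 2 P := fun i =>
    memLp_mul_of_bound ((hb i).mono hm).aestronglyMeasurable (hbM i) (hW.memLp i)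
  have hint : ∀ i j, Integrable (fun ω => b i ω * b j ω * (W ω i * W ω j)) P := fun i j =>
    ((hbW i).integrable_mul (hbW j)).congr (ae_of_all _ fun ω => by simp only [Pi.mul_apply]; ring)
  have hterm : ∀ i j, ∫ ω, b i ω * b j ω * (W ω i * W ω j) ∂P
      = if i = j then h * ∫ ω, b i ω ^ 2 ∂P else 0 := by
    intro i j
    rw [← integral_mul_condExp (b := fun ω => b i ω * b j ω) hm ((hb i).mul (hb j)) (hint i j)
      (((hW.memLp i).integrable_mul (hW.memLp j)))]
    rw [integral_congr_ae ((hW.condExp_mul i j).mono fun ω hω => congrArg (b i ω * b j ω * ·) hω)]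
    split_ifs with hij
    · subst hij
      rw [← integral_const_mul]
      exact integral_congr_ae (ae_of_all _ fun ω => by ring)
    · simp
  calc ∫ ω, (∑ i, b i ω * W ω i) ^ 2 ∂P
      = ∫ ω, ∑ i, ∑ j, b i ω * b j ω * (W ω i * W ω j) ∂P := by
        congr 1; ext ω
        rw [sq, sum_mul_sum]
        exact sum_congr rfl fun i _ => sum_congr rfl fun j _ => by ring
    _ = ∑ i, ∑ j, ∫ ω, b i ω * b j ω * (W ω i * W ω j) ∂P := by
        rw [integral_finsetSum _ fun i _ => integrable_finsetSum _ fun j _ => hint i j]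
        exact sum_congr rfl fun i _ => integral_finsetSum _ fun j _ => hint i j
    _ = h * ∑ i, ∫ ω, b i ω ^ 2 ∂P := by
        simp only [hterm, sum_ite_eq, mem_univ, if_true, mul_sum]

lemma integral_sub_condExp_mul (hW : IsCondIsotropicIncrement m P h W) (hm : m ≤ m0)
    {U b : Ω → ℝ} {M : ℝ} (hU : MemLp U 2 P) (hb : StronglyMeasurable[m] b)
    (hbM : ∀ ω, |b ω| ≤ M) (i : ι) :
    ∫ ω, (U ω - P[U|m] ω) * (b ω * W ω i) ∂P
      = ∫ ω, b ω * P[fun ω => U ω * W ω i|m] ω ∂P := by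
  have hb' : AEStronglyMeasurable b P := (hb.mono hm).aestronglyMeasurable
  have hbW : MemLp (fun ω => b ω * W ω i) 2 P := memLp_mul_of_bound hb' hbM (hW.memLp i)
  have hG : MemLp (P[U|m]) 2 P := hU.condExp one_le_two
  have hUW : Integrable (fun ω => U ω * W ω i) P := hU.integrable_mul (hW.memLp i)
  have hGbW : Integrable (fun ω => P[U|m] ω * b ω * W ω i) P :=
    (hG.integrable_mul hbW).congr (ae_of_all _ fun ω => by simp only [Pi.mul_apply]; ring)
  have hGW : ∫ ω, P[U|m] ω * b ω * W ω i ∂P = 0 :=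
    hW.integral_mul_eq_zero hm (stronglyMeasurable_condExp.mul hb) i hGbW
  calc ∫ ω, (U ω - P[U|m] ω) * (b ω * W ω i) ∂P
      = ∫ ω, b ω * (U ω * W ω i) ∂P - ∫ ω, P[U|m] ω * b ω * W ω i ∂P := by
        rw [← integral_sub (hUW.bdd_mul hb' (ae_of_all _ hbM)) hGbW]
        exact integral_congr_ae (ae_of_all _ fun ω => by ring)
    _ = ∫ ω, b ω * P[fun ω => U ω * W ω i|m] ω ∂P := by
        rw [hGW, sub_zero, integral_mul_condExp hm hb (hUW.bdd_mul hb' (ae_of_all _ hbM)) hUW]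

lemma two_mul_sum_integral_le [Fintype ι] (hW : IsCondIsotropicIncrement m P h W)
    (hm : m ≤ m0) (hh : 0 < h) {U : Ω → ℝ} (hU : MemLp U 2 P) {b : ι → Ω → ℝ} {M : ℝ}
    (hb : ∀ i, StronglyMeasurable[m] (b i)) (hbM : ∀ i ω, |b i ω| ≤ M) :
    2 * ∑ i, ∫ ω, b i ω * P[fun ω => U ω * W ω i|m] ω ∂P
      ≤ h * ∫ ω, (U ω - P[U|m] ω) ^ 2 ∂P + ∑ i, ∫ ω, b i ω ^ 2 ∂P := by
  have hbW : ∀ i, MemLp (fun ω => b i ω * W ω i) 2 P := fun i =>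
    memLp_mul_of_bound ((hb i).mono hm).aestronglyMeasurable (hbM i) (hW.memLp i)
  have hR : MemLp (fun ω => U ω - P[U|m] ω) 2 P := hU.sub (hU.condExp one_le_two)
  have hX : MemLp (fun ω => ∑ i, b i ω * W ω i) 2 P := memLp_finsetSum _ fun i _ => hbW i
  have hRX : ∫ ω, h * (U ω - P[U|m] ω) * ∑ i, b i ω * W ω i ∂P
      = h * ∑ i, ∫ ω, b i ω * P[fun ω => U ω * W ω i|m] ω ∂P := by
    have hint : ∀ i, Integrable (fun ω => (U ω - P[U|m] ω) * (b i ω * W ω i)) P :=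
      fun i => hR.integrable_mul (hbW i)
    simp only [mul_assoc]
    rw [integral_const_mul]
    congr 1
    simp only [mul_sum]
    rw [integral_finsetSum _ fun i _ => hint i]
    exact sum_congr rfl fun i _ => hW.integral_sub_condExp_mul hm hU (hb i) (hbM i) i
  have hsq := integral_sub_sq (hR.const_mul h) hX
  simp only [mul_pow, integral_const_mul] at hsq
  rw [hRX, hW.integral_sum_mul_sq hm hb hbM] at hsq
  have hnonneg : 0 ≤ ∫ ω, (h * (U ω - P[U|m] ω) - ∑ i, b i ω * W ω i) ^ 2 ∂P :=
    integral_nonneg fun ω => sq_nonneg _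
  nlinarith

theorem integral_sum_sq_condExp_mul_le [Fintype ι] (hW : IsCondIsotropicIncrement m P h W)
    (hm : m ≤ m0) (hh : 0 < h) {U : Ω → ℝ} (hU : MemLp U 2 P) :
    ∫ ω, ∑ i, P[fun ω => U ω * W ω i|m] ω ^ 2 ∂P ≤ h * ∫ ω, (U ω - P[U|m] ω) ^ 2 ∂P := by
  set V : ι → Ω → ℝ := fun i => P[fun ω => U ω * W ω i|m]
  have hV : ∀ i, StronglyMeasurable[m] (V i) := fun i => stronglyMeasurable_condExp
  have hVint : ∀ i, Integrable (V i) P := fun i => integrable_condExp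
  set c : ℕ → ι → Ω → ℝ := fun M i ω => max (-(M : ℝ)) (min (V i ω) M)
  have hc : ∀ M i, StronglyMeasurable[m] (c M i) := fun M i =>
    (measurable_const.max ((hV i).measurable.min measurable_const)).stronglyMeasurable
  have hcM : ∀ M i ω, |c M i ω| ≤ M := fun M i ω => abs_max_neg_min_le M.cast_nonneg _
  have hc_sq : ∀ M i ω, c M i ω ^ 2 = min (V i ω ^ 2) ((M : ℝ) ^ 2) := fun M i ω =>
    sq_max_neg_min M.cast_nonneg _
  have hc_int : ∀ M i, Integrable (fun ω => c M i ω ^ 2) P := fun M i =>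
    (MemLp.of_bound ((hc M i).mono hm).aestronglyMeasurable M
      (ae_of_all _ (hcM M i))).integrable_sq
  have hc_trunc : ∀ M, ∫ ω, ∑ i, c M i ω ^ 2 ∂P ≤ h * ∫ ω, (U ω - P[U|m] ω) ^ 2 ∂P := by
    intro M
    have hcV : ∀ i, ∫ ω, c M i ω ^ 2 ∂P ≤ ∫ ω, c M i ω * V i ω ∂P := fun i =>
      integral_mono (hc_int M i) ((hVint i).bdd_mul ((hc M i).mono hm).aestronglyMeasurable
        (ae_of_all _ (hcM M i))) fun ω => sq_max_neg_min_le_mul M.cast_nonneg _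
    have := hW.two_mul_sum_integral_le hm hh hU (hc M) (hcM M)
    rw [integral_finsetSum _ fun i _ => hc_int M i]
    linarith [sum_le_sum fun i (_ : i ∈ univ) => hcV i]
  refine integral_le_of_tendsto_of_monotone
    (fun M => integrable_finsetSum _ fun i _ => hc_int M i) (ae_of_all _ fun ω M M' hMM' => ?_)
    (ae_of_all _ fun ω => ?_) (mul_nonneg hh.le (integral_nonneg fun ω => sq_nonneg _)) hc_trunc
  · simp only [hc_sq]
    gcongr
  · refine tendsto_const_nhds.congr' ?_
    filter_upwards [tendsto_natCast_atTop_atTop.eventually_ge_atTop (∑ i, |V i ω|)] with M hM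
    refine sum_congr rfl fun i _ => ?_
    have hVi : |V i ω| ≤ M :=
      (single_le_sum (fun j _ => abs_nonneg (V j ω)) (mem_univ i)).trans hM
    rw [hc_sq, min_eq_left (sq_le_sq.mpr (hVi.trans (le_abs_self _)))]

end IsCondIsotropicIncrement

section DiscreteGronwall

lemma le_pow_mul_of_le_mul_succ {a : ℕ → ℝ} {K b : ℝ} {N : ℕ} (hK : 1 ≤ K) (hb : 0 ≤ b)
    (ha : ∀ n < N, a n ≤ K * (a (n + 1) + b)) {n : ℕ} (hn : n ≤ N) :
    a n ≤ K ^ (N - n) * (a N + (N - n : ℕ) * b) := by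
  induction hn using Nat.decreasingInduction with
  | self => simp
  | of_succ n hn ih =>
    obtain ⟨k, hk⟩ : ∃ k, N - n = k + 1 := ⟨N - (n + 1), by omega⟩
    rw [show N - (n + 1) = k by omega] at ih
    have hKk : K * b ≤ K ^ k * K * b :=
      mul_le_mul_of_nonneg_right (le_mul_of_one_le_left (by linarith) (one_le_pow₀ hK)) hb
    calc a n ≤ K * (a (n + 1) + b) := ha n hn
      _ ≤ K * (K ^ k * (a N + k * b) + b) := by gcongr
      _ ≤ K ^ (N - n) * (a N + (N - n : ℕ) * b) := by
        rw [hk, pow_succ]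
        push_cast
        nlinarith

variable {N : ℕ} {h T β c E : ℝ} {A z ε : ℕ → ℝ}

lemma le_exp_mul_of_step (hh : 0 ≤ h) (hT : N * h = T) (hβ : 0 ≤ β) (hhβ : h * β ≤ 1 / 2)
    (hc : 0 ≤ c) (hA : ∀ n, 0 ≤ A n) (hz : ∀ n, 0 ≤ z n) (hE : 0 ≤ E)
    (hεE : ∀ n < N, ε n ≤ E)
    (hstep : ∀ n < N, A n + h / 2 * z n ≤ A (n + 1) + h * β * A n + c * h * ε n)
    {n : ℕ} (hn : n ≤ N) :
    A n ≤ Real.exp (2 * β * T) * (A N + c * T * E) := by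
  have hhβ0 : 0 ≤ h * β := mul_nonneg hh hβ
  have hchE : 0 ≤ c * h * E := by positivity
  -- `1 / (1 - x) ≤ 1 + 2 x` for `0 ≤ x ≤ 1 / 2`
  have hrec : ∀ n < N, A n ≤ (1 + 2 * (h * β)) * (A (n + 1) + c * h * E) := by
    intro n hn
    have h1 : (1 - h * β) * A n ≤ A (n + 1) + c * h * E := by
      nlinarith [hstep n hn, mul_nonneg hh (hz n), mul_le_mul_of_nonneg_left (hεE n hn)
        (mul_nonneg hc hh)]
    nlinarith [hA n, mul_nonneg (mul_nonneg hhβ0 (by linarith : 0 ≤ 1 - 2 * (h * β))) (hA n)]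
  have hpow : (1 + 2 * (h * β)) ^ (N - n) ≤ Real.exp (2 * β * T) :=
    calc (1 + 2 * (h * β)) ^ (N - n) ≤ (1 + 2 * (h * β)) ^ N :=
          pow_le_pow_right₀ (by linarith) (Nat.sub_le N n)
      _ ≤ Real.exp (2 * (h * β)) ^ N := by
          gcongr
          linarith [Real.add_one_le_exp (2 * (h * β))]
      _ = Real.exp (2 * β * T) := by rw [← Real.exp_nat_mul, ← hT]; ring_nf
  have hsteps : ((N - n : ℕ) : ℝ) * (c * h * E) ≤ c * T * E := by
    rw [← hT]
    nlinarith [(Nat.cast_le (α := ℝ)).mpr (Nat.sub_le N n)]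
  calc A n ≤ (1 + 2 * (h * β)) ^ (N - n) * (A N + (N - n : ℕ) * (c * h * E)) :=
        le_pow_mul_of_le_mul_succ (by linarith) hchE hrec hn
    _ ≤ Real.exp (2 * β * T) * (A N + c * T * E) := by
        gcongr
        exact add_nonneg (hA N) (by positivity)

lemma sup_add_sum_le_of_step (hh : 0 ≤ h) (hT : N * h = T) (hβ : 0 ≤ β)
    (hhβ : h * β ≤ 1 / 2) (hc : 0 ≤ c) (hA : ∀ n, 0 ≤ A n) (hz : ∀ n, 0 ≤ z n) (hE : 0 ≤ E)
    (hεE : ∀ n < N, ε n ≤ E)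
    (hstep : ∀ n < N, A n + h / 2 * z n ≤ A (n + 1) + h * β * A n + c * h * ε n) :
    (range (N + 1)).sup' nonempty_range_add_one A + ∑ n ∈ range N, h * z n
      ≤ ((1 + 2 * β * T) * Real.exp (2 * β * T) + 2) * (1 + c * T) * (A N + E) := by
  set B := Real.exp (2 * β * T) * (A N + c * T * E)
  have hAB : ∀ n ≤ N, A n ≤ B :=
    fun n => le_exp_mul_of_step hh hT hβ hhβ hc hA hz hE hεE hstep
  have hsup : (range (N + 1)).sup' nonempty_range_add_one A ≤ B :=
    sup'_le _ _ fun n hn => hAB n (Nat.lt_succ_iff.mp (mem_range.mp hn))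
  have hsum : ∑ n ∈ range N, h * z n ≤ 2 * (A N - A 0) + 2 * (β * T) * B + 2 * (c * T * E) :=
    calc ∑ n ∈ range N, h * z n
        ≤ ∑ n ∈ range N, (2 * (A (n + 1) - A n) + 2 * (h * β * B + c * h * E)) := by
          refine sum_le_sum fun n hn => ?_
          have hn := mem_range.mp hn
          nlinarith [hstep n hn, mul_le_mul_of_nonneg_left (hAB n hn.le) (mul_nonneg hh hβ),
            mul_le_mul_of_nonneg_left (hεE n hn) (mul_nonneg hc hh)]
      _ = 2 * (A N - A 0) + 2 * (β * T) * B + 2 * (c * T * E) := by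
          rw [sum_add_distrib, ← mul_sum, sum_range_sub, sum_const, card_range, nsmul_eq_mul,
            ← hT]
          ring
  have hB : 0 ≤ B := (hA 0).trans (hAB 0 (Nat.zero_le N))
  have hcT : 0 ≤ c * T := by rw [← hT]; positivity
  have hAE : A N + c * T * E ≤ (1 + c * T) * (A N + E) := by nlinarith [hA N]
  calc (range (N + 1)).sup' nonempty_range_add_one A + ∑ n ∈ range N, h * z n
      ≤ (1 + 2 * β * T) * B + 2 * (A N + c * T * E) := by nlinarith [hA 0]
    _ = ((1 + 2 * β * T) * Real.exp (2 * β * T) + 2) * (A N + c * T * E) := by ring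
    _ ≤ ((1 + 2 * β * T) * Real.exp (2 * β * T) + 2) * ((1 + c * T) * (A N + E)) := by
        gcongr
        rw [← hT]
        positivity
    _ = _ := by ring

end DiscreteGronwall

section Scheme

variable {Ω : Type} [MeasurableSpace Ω] {P : Measure Ω} {N d : ℕ} {h : ℝ}
  {𝒢 : Filtration ℕ (inferInstance : MeasurableSpace Ω)} {ΔW : ℕ → Ω → Fin d → ℝ}

lemma IncrementsOK.isCondIsotropicIncrement (hW : IncrementsOK P N d h 𝒢 ΔW) {n : ℕ}
    (hn : n < N) : IsCondIsotropicIncrement (𝒢 n) P h (ΔW n) :=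
  ⟨(hW n hn).2.1, (hW n hn).2.2.1, (hW n hn).2.2.2⟩

lemma SolvesScheme.sub [IsFiniteMeasure P] (hW : IncrementsOK P N d h 𝒢 ΔW)
    {Y₁ Y₂ f₁ f₂ : ℕ → Ω → ℝ} {Z₁ Z₂ : ℕ → Ω → Fin d → ℝ}
    (hs₁ : SolvesScheme P N d h 𝒢 ΔW Y₁ Z₁ f₁) (hs₂ : SolvesScheme P N d h 𝒢 ΔW Y₂ Z₂ f₂) :
    SolvesScheme P N d h 𝒢 ΔW (Y₁ - Y₂) (Z₁ - Z₂) (f₁ - f₂) := by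
  obtain ⟨hY₁, hY₁m, hf₁, hf₁m, hY₁eq, hZ₁eq⟩ := hs₁
  obtain ⟨hY₂, hY₂m, hf₂, hf₂m, hY₂eq, hZ₂eq⟩ := hs₂
  refine ⟨fun n hn => (hY₁ n hn).sub (hY₂ n hn), fun n hn => (hY₁m n hn).sub (hY₂m n hn),
    fun n hn => (hf₁ n hn).sub (hf₂ n hn), fun n hn => (hf₁m n hn).sub (hf₂m n hn),
    fun n hn => ?_, fun n hn i => ?_⟩
  · filter_upwards [hY₁eq n hn, hY₂eq n hn, condExp_sub ((hY₁ (n + 1) hn).integrable one_le_two)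
      ((hY₂ (n + 1) hn).integrable one_le_two) (𝒢 n)] with ω h₁ h₂ h₃
    simp only [Pi.sub_apply] at h₃ ⊢
    rw [h₁, h₂, h₃]
    ring
  · have hI₁ : Integrable (fun ω => Y₁ (n + 1) ω * ΔW n ω i) P :=
      (hY₁ (n + 1) hn).integrable_mul ((hW n hn).2.1 i)
    have hI₂ : Integrable (fun ω => Y₂ (n + 1) ω * ΔW n ω i) P :=
      (hY₂ (n + 1) hn).integrable_mul ((hW n hn).2.1 i)
    filter_upwards [hZ₁eq n hn i, hZ₂eq n hn i, condExp_sub hI₁ hI₂ (𝒢 n)] with ω h₁ h₂ h₃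
    simp only [Pi.sub_apply, sub_mul]
    rw [h₁, h₂, ← mul_sub]
    exact congrArg (h⁻¹ * ·) h₃.symm

lemma SolvesScheme.energy_step [IsFiniteMeasure P] (hW : IncrementsOK P N d h 𝒢 ΔW)
    {Y f : ℕ → Ω → ℝ} {Z : ℕ → Ω → Fin d → ℝ} (hs : SolvesScheme P N d h 𝒢 ΔW Y Z f)
    (hh : 0 < h) {n : ℕ} (hn : n < N) :
    h * ∫ ω, ∑ i, Z n ω i ^ 2 ∂P
      ≤ ∫ ω, Y (n + 1) ω ^ 2 ∂P - ∫ ω, Y n ω ^ 2 ∂P + 2 * h * ∫ ω, Y n ω * f n ω ∂P := by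
  obtain ⟨hY, -, hf, -, hYeq, hZeq⟩ := hs
  set V : Fin d → Ω → ℝ := fun i => P[fun ω => Y (n + 1) ω * ΔW n ω i|𝒢 n]
  have hbessel := (hW.isCondIsotropicIncrement hn).integral_sum_sq_condExp_mul_le
    (𝒢.le n) hh (hY (n + 1) hn)
  rw [integral_sq_sub_condExp (𝒢.le n) (hY (n + 1) hn)] at hbessel
  have hZV : ∫ ω, ∑ i, Z n ω i ^ 2 ∂P = (h⁻¹) ^ 2 * ∫ ω, ∑ i, V i ω ^ 2 ∂P := by
    rw [← integral_const_mul]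
    refine integral_congr_ae ?_
    filter_upwards [ae_all_iff.mpr (hZeq n hn)] with ω hω
    simp only [hω, mul_sum, mul_pow, V]
  have hcond : ∫ ω, P[Y (n + 1)|𝒢 n] ω ^ 2 ∂P = ∫ ω, (Y n ω - h * f n ω) ^ 2 ∂P := by
    refine integral_congr_ae ?_
    filter_upwards [hYeq n hn] with ω hω
    rw [hω]
    ring
  have hexpand := integral_sub_sq (hY n hn.le) ((hf n hn).const_mul h)
  simp only [mul_pow, integral_const_mul, mul_left_comm (Y n _) h] at hexpand
  have hf2 : 0 ≤ h ^ 2 * ∫ ω, f n ω ^ 2 ∂P := by positivity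
  have hV : h⁻¹ * ∫ ω, ∑ i, V i ω ^ 2 ∂P ≤ ∫ ω, Y (n + 1) ω ^ 2 ∂P
      - ∫ ω, P[Y (n + 1)|𝒢 n] ω ^ 2 ∂P := by
    rw [inv_mul_le_iff₀ hh]
    exact hbessel
  rw [hZV, ← mul_assoc, sq, ← mul_assoc, mul_inv_cancel₀ hh.ne', one_mul]
  linarith

lemma stability_step [IsFiniteMeasure P] (hW : IncrementsOK P N d h 𝒢 ΔW)
    {Y₁ Y₂ f₁ f₂ : ℕ → Ω → ℝ} {Z₁ Z₂ : ℕ → Ω → Fin d → ℝ}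
    (hs₁ : SolvesScheme P N d h 𝒢 ΔW Y₁ Z₁ f₁) (hs₂ : SolvesScheme P N d h 𝒢 ΔW Y₂ Z₂ f₂)
    {k_y L_f L_v : ℝ} {ε : ℕ → ℝ} (hD : DriverDiff P N d 𝒢 k_y L_f L_v ε Y₁ Y₂ Z₁ Z₂ f₁ f₂)
    (hh : 0 < h) (hLf : 0 < L_f) {n : ℕ} (hn : n < N) :
    ∫ ω, (Y₁ n ω - Y₂ n ω) ^ 2 ∂P + h / 2 * ∫ ω, ∑ i, (Z₁ n ω i - Z₂ n ω i) ^ 2 ∂P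
      ≤ ∫ ω, (Y₁ (n + 1) ω - Y₂ (n + 1) ω) ^ 2 ∂P
        + h * (2 * k_y + 2 * L_f) * ∫ ω, (Y₁ n ω - Y₂ n ω) ^ 2 ∂P
        + L_v / (2 * L_f) * h * ε n := by
  obtain ⟨φ, ψ, -, -, hφ, hψ, hsplit, hφY, hψZ⟩ := hD n hn
  have henergy := (hs₁.sub hW hs₂).energy_step hW hh hn
  simp only [Pi.sub_apply] at henergy
  have hdriver := integral_mul_le_of_ae_eq_add (y := fun ω => Y₁ n ω - Y₂ n ω)
    ((hs₁.1 n hn.le).sub (hs₂.1 n hn.le)) hφ hψ hsplit hLf hφY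
  have hψZ' := mul_le_mul_of_nonneg_left hψZ (inv_nonneg.mpr (by positivity : 0 ≤ 4 * L_f))
  have hscale : 2 * h * ((4 * L_f)⁻¹ * (L_v * ε n + L_f * ∫ ω, ∑ i, (Z₁ n ω i - Z₂ n ω i) ^ 2 ∂P))
      = L_v / (2 * L_f) * h * ε n + h / 2 * ∫ ω, ∑ i, (Z₁ n ω i - Z₂ n ω i) ^ 2 ∂P := by
    field_simp
    ring
  nlinarith [mul_le_mul_of_nonneg_left hdriver (by positivity : 0 ≤ 2 * h),
    mul_le_mul_of_nonneg_left hψZ' (by positivity : 0 ≤ 2 * h)]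

end Scheme

/-- A posteriori stability estimate for the generic discrete BSDE scheme:
there is a constant `C > 0` depending only on `k_y, L_f, L_v, T` such that, for every
`N ≥ 1` with `h = T/N` and `h·(2k_y + 2L_f) ≤ 1/2`, for any two solutions of the scheme
satisfying the driver-difference assumption,
`max_n E[(δY_n)²] + Σ_n h·E[|δZ_n|²] ≤ C·(E[(δY_N)²] + max_n ε_n)`. -/
theorem stability_estimate_discrete_scheme
    (T k_y L_f L_v : ℝ) (hT : 0 < T) (hLf : 0 < L_f) (hLv : 0 ≤ L_v)
    (hkyLf : 0 ≤ k_y + L_f) :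
    ∃ C : ℝ, 0 < C ∧
      ∀ (N : ℕ) (hN : 1 ≤ N),
        (T / N) * (2 * k_y + 2 * L_f) ≤ 1 / 2 →
        ∀ (Ω : Type) [MeasurableSpace Ω] (P : Measure Ω) [IsProbabilityMeasure P]
          (d : ℕ), 1 ≤ d →
        ∀ (𝒢 : Filtration ℕ (inferInstance : MeasurableSpace Ω))
          (ΔW : ℕ → Ω → Fin d → ℝ)
          (Y1 Y2 : ℕ → Ω → ℝ) (Z1 Z2 : ℕ → Ω → Fin d → ℝ)
          (f1 f2 : ℕ → Ω → ℝ) (ε : ℕ → ℝ),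
          IncrementsOK P N d (T / N) 𝒢 ΔW →
          SolvesScheme P N d (T / N) 𝒢 ΔW Y1 Z1 f1 →
          SolvesScheme P N d (T / N) 𝒢 ΔW Y2 Z2 f2 →
          (∀ n < N, 0 ≤ ε n) →
          DriverDiff P N d 𝒢 k_y L_f L_v ε Y1 Y2 Z1 Z2 f1 f2 →
          (Finset.range (N + 1)).sup' (nonempty_range_iff.mpr (Nat.succ_ne_zero N))
              (fun n => ∫ ω, (Y1 n ω - Y2 n ω) ^ 2 ∂P)
            + ∑ n ∈ Finset.range N,
                (T / N) * ∫ ω, (∑ i, (Z1 n ω i - Z2 n ω i) ^ 2) ∂P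
          ≤ C * ((∫ ω, (Y1 N ω - Y2 N ω) ^ 2 ∂P)
              + (Finset.range N).sup'
                  (nonempty_range_iff.mpr (Nat.one_le_iff_ne_zero.mp hN)) ε) := by
  set β := 2 * k_y + 2 * L_f
  set c := L_v / (2 * L_f)
  have hβ : 0 ≤ β := by linarith
  have hc : 0 ≤ c := div_nonneg hLv (by linarith)
  refine ⟨((1 + 2 * β * T) * Real.exp (2 * β * T) + 2) * (1 + c * T),
    mul_pos (by nlinarith [Real.exp_pos (2 * β * T), mul_nonneg hβ hT.le])
      (by nlinarith [mul_nonneg hc hT.le]), ?_⟩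
  intro N hN hsmall Ω _ P _ d _ 𝒢 ΔW Y1 Y2 Z1 Z2 f1 f2 ε hW hs1 hs2 hε hD
  have hh : 0 < T / N := div_pos hT (by exact_mod_cast hN)
  exact sup_add_sum_le_of_step hh.le (by field_simp) hβ hsmall hc
    (fun n => integral_nonneg fun ω => sq_nonneg _)
    (fun n => integral_nonneg fun ω => sum_nonneg fun i _ => sq_nonneg _)
    ((hε 0 hN).trans (le_sup' ε (mem_range.mpr hN))) (fun n hn => le_sup' ε (mem_range.mpr hn))
    (fun n hn => stability_step hW hs1 hs2 hD hh hLf hn)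

end
end

section
/- Let (Ω, 𝒜, P) be a probability space, 𝒢 ⊆ 𝒜 a sub-σ-algebra, h > 0, Y : Ω → ℝ square-integrable, and ΔW : Ω → ℝ^d with square-integrable components satisfying, almost surely, E[ΔWⁱ | 𝒢] = 0 and E[ΔWⁱ·ΔWʲ | 𝒢] = h if i = j and 0 otherwise (1 ≤ i, j ≤ d). Define Zⁱ := h⁻¹·E[Y·ΔWⁱ | 𝒢] for 1 ≤ i ≤ d. Then h·E[ Σ_{i=1}^d (Zⁱ)² ] ≤ E[ (Y − E[Y | 𝒢])² ]. -/
/-! For a bounded 𝒢-measurable vector `q`, expanding `0 ≤ E[(X - ∑ qⁱ ΔWⁱ)²]` with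
`X = Y - E[Y|𝒢]` and conditioning every term on 𝒢 gives
`0 ≤ E[X²] - 2h E[⟨q, Z⟩] + h E[|q|²]`, because `E[X ΔWⁱ | 𝒢] = h Zⁱ` (the mean-zero increments
do not see `E[Y|𝒢]`) and `E[ΔWⁱ ΔWʲ | 𝒢] = h δᵢⱼ`. The control `Z` is a priori only integrable,
so we take `q = Z` on `{|Z| ≤ N}` and `0` elsewhere, which yields `h E[|Z|²; |Z| ≤ N] ≤ E[X²]`,
and let `N → ∞`. -/

open MeasureTheory Finset

theorem sq_sub_sum_mul {R ι : Type*} [CommRing R] (s : Finset ι) (x : R) (a b : ι → R) :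
    (x - ∑ i ∈ s, a i * b i) ^ 2
      = x ^ 2 - 2 * ∑ i ∈ s, a i * (x * b i) + ∑ i ∈ s, ∑ j ∈ s, (a i * a j) * (b i * b j) := by
  have hsq : (∑ i ∈ s, a i * b i) ^ 2 = ∑ i ∈ s, ∑ j ∈ s, (a i * a j) * (b i * b j) := by
    rw [sq, sum_mul_sum]
    exact sum_congr rfl fun i _ => sum_congr rfl fun j _ => by ring
  have hmul : x * ∑ i ∈ s, a i * b i = ∑ i ∈ s, a i * (x * b i) := by
    rw [mul_sum]
    exact sum_congr rfl fun i _ => by ring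
  linear_combination hsq - 2 * hmul

namespace MeasureTheory

theorem aecover_le_natCast {α : Type*} {mα : MeasurableSpace α} {μ : Measure α} {g : α → ℝ}
    (hg : Measurable g) : AECover μ Filter.atTop fun N : ℕ => {x | g x ≤ N} where
  ae_eventually_mem := .of_forall fun x => tendsto_natCast_atTop_atTop.eventually_ge_atTop (g x)
  measurableSet _ := hg measurableSet_Iic

theorem AECover.integral_le_of_setIntegral_le {α ι : Type*} {mα : MeasurableSpace α}
    {μ : Measure α} {l : Filter ι} [l.NeBot] [l.IsCountablyGenerated] {φ : ι → Set α}
    (hφ : AECover μ l φ) {f : α → ℝ} {I : ℝ}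
    (hfi : ∀ i, IntegrableOn f (φ i) μ) (hf : ∀ᵐ x ∂μ, 0 ≤ f x)
    (hbound : ∀ i, ∫ x in φ i, f x ∂μ ≤ I) : ∫ x, f x ∂μ ≤ I :=
  le_of_tendsto' (hφ.integral_tendsto_of_countably_generated
    (hφ.integrable_of_integral_bounded_of_nonneg_ae I hfi hf (.of_forall hbound))) hbound

variable {Ω : Type*} {m m0 : MeasurableSpace Ω} {μ : Measure Ω}
variable {d : ℕ} {h : ℝ} {X : Ω → ℝ} {W Z q : Ω → Fin d → ℝ}

theorem memLp_top_restrict_of_norm_le {i : Fin d}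
    (hZ : AEStronglyMeasurable (fun ω => Z ω i) μ) {A : Set Ω} (hA : MeasurableSet A) {C : ℝ}
    (hZC : ∀ ω ∈ A, ‖Z ω‖ ≤ C) : MemLp (fun ω => Z ω i) ⊤ (μ.restrict A) :=
  memLp_top_of_bound hZ.restrict C <|
    ae_restrict_of_forall_mem hA fun ω hω => (norm_le_pi_norm (Z ω) i).trans (hZC ω hω)

variable [IsFiniteMeasure μ]

theorem integral_mul_eq_of_condExp_ae_eq (hm : m ≤ m0) {q f g : Ω → ℝ}
    (hq : StronglyMeasurable[m] q) (hq_top : MemLp q ⊤ μ) (hf : Integrable f μ)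
    (hfg : μ[f|m] =ᵐ[μ] g) :
    ∫ ω, q ω * f ω ∂μ = ∫ ω, q ω * g ω ∂μ := by
  calc ∫ ω, q ω * f ω ∂μ = ∫ ω, μ[q * f|m] ω ∂μ := (integral_condExp hm).symm
    _ = ∫ ω, q ω * g ω ∂μ := by
      refine integral_congr_ae ?_
      filter_upwards [condExp_mul_of_stronglyMeasurable_left hq (hf.mul_of_top_right hq_top) hf,
        hfg] with ω hpull hω
      rw [hpull, Pi.mul_apply, hω]

theorem condExp_sub_condExp_mul_ae_eq {Y W : Ω → ℝ} (hY : MemLp Y 2 μ)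
    (hW : MemLp W 2 μ) (hW_mean : μ[W|m] =ᵐ[μ] 0) :
    μ[(fun ω => (Y ω - μ[Y|m] ω) * W ω)|m] =ᵐ[μ] μ[(fun ω => Y ω * W ω)|m] := by
  have hYW : Integrable (Y * W) μ := hY.integrable_mul hW
  have hEYW : Integrable (μ[Y|m] * W) μ := (hY.condExp one_le_two).integrable_mul hW
  have hsplit : (fun ω => (Y ω - μ[Y|m] ω) * W ω) = Y * W - μ[Y|m] * W := by
    ext ω; simp only [Pi.sub_apply, Pi.mul_apply]; ring
  have hpull : μ[μ[Y|m] * W|m] =ᵐ[μ] μ[Y|m] * μ[W|m] :=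
    condExp_mul_of_stronglyMeasurable_left stronglyMeasurable_condExp hEYW
      (hW.integrable one_le_two)
  rw [hsplit]
  filter_upwards [condExp_sub hYW hEYW m, hpull, hW_mean] with ω h1 h2 h3
  simp only [h1, h2, h3, Pi.sub_apply, Pi.mul_apply, Pi.zero_apply, mul_zero, sub_zero]
  rfl

theorem integral_mul_mul_eq_ite (hm : m ≤ m0) (hW : ∀ i, MemLp (fun ω => W ω i) 2 μ)
    (hcov : ∀ i j, μ[(fun ω => W ω i * W ω j)|m] =ᵐ[μ] fun _ => if i = j then h else 0)
    (hq : ∀ i, StronglyMeasurable[m] (fun ω => q ω i))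
    (hq_top : ∀ i, MemLp (fun ω => q ω i) ⊤ μ) (i j : Fin d) :
    ∫ ω, (q ω i * q ω j) * (W ω i * W ω j) ∂μ = if i = j then h * ∫ ω, q ω i ^ 2 ∂μ else 0 := by
  rw [integral_mul_eq_of_condExp_ae_eq (q := fun ω => q ω i * q ω j)
    (f := fun ω => W ω i * W ω j) hm ((hq i).mul (hq j))
    ((hq_top j).mul (hq_top i)) ((hW i).integrable_mul (hW j)) (hcov i j)]
  split_ifs with hij
  · subst hij
    rw [← integral_const_mul]
    simp only [sq, mul_comm]
  · simp

theorem integral_sq_sub_sum_mul (hm : m ≤ m0) (hX : MemLp X 2 μ)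
    (hW : ∀ i, MemLp (fun ω => W ω i) 2 μ)
    (hcov : ∀ i j, μ[(fun ω => W ω i * W ω j)|m] =ᵐ[μ] fun _ => if i = j then h else 0)
    (hXW : ∀ i, μ[(fun ω => X ω * W ω i)|m] =ᵐ[μ] fun ω => h * Z ω i)
    (hq : ∀ i, StronglyMeasurable[m] (fun ω => q ω i))
    (hq_top : ∀ i, MemLp (fun ω => q ω i) ⊤ μ) :
    ∫ ω, (X ω - ∑ i, q ω i * W ω i) ^ 2 ∂μ
      = ∫ ω, X ω ^ 2 ∂μ - 2 * h * ∑ i, ∫ ω, q ω i * Z ω i ∂μ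
        + h * ∑ i, ∫ ω, q ω i ^ 2 ∂μ := by
  have hXW_int : ∀ i, Integrable (fun ω => X ω * W ω i) μ := fun i => hX.integrable_mul (hW i)
  have hcross : ∀ i, ∫ ω, q ω i * (X ω * W ω i) ∂μ = h * ∫ ω, q ω i * Z ω i ∂μ := fun i => by
    rw [integral_mul_eq_of_condExp_ae_eq hm (hq i) (hq_top i) (hXW_int i) (hXW i),
      ← integral_const_mul]
    simp only [mul_left_comm]
  have hcross_int : ∀ i, Integrable (fun ω => q ω i * (X ω * W ω i)) μ :=
    fun i => (hXW_int i).mul_of_top_right (hq_top i)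
  have hquad_int : ∀ i j, Integrable (fun ω => (q ω i * q ω j) * (W ω i * W ω j)) μ :=
    fun i j => ((hW i).integrable_mul (hW j)).mul_of_top_right ((hq_top j).mul (hq_top i))
  have hcross_sum : Integrable (fun ω => 2 * ∑ i, q ω i * (X ω * W ω i)) μ :=
    (integrable_finsetSum _ fun i _ => hcross_int i).const_mul 2
  have hquad_sum : Integrable (fun ω => ∑ i, ∑ j, (q ω i * q ω j) * (W ω i * W ω j)) μ :=
    integrable_finsetSum _ fun i _ => integrable_finsetSum _ fun j _ => hquad_int i j
  have hlin : Integrable (fun ω => X ω ^ 2 - 2 * ∑ i, q ω i * (X ω * W ω i)) μ :=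
    hX.integrable_sq.sub hcross_sum
  simp_rw [sq_sub_sum_mul]
  rw [integral_add hlin hquad_sum, integral_sub hX.integrable_sq hcross_sum, integral_const_mul,
    integral_finsetSum _ fun i _ => hcross_int i,
    integral_finsetSum _ fun i _ => integrable_finsetSum _ fun j _ => hquad_int i j]
  simp_rw [integral_finsetSum _ fun j _ => hquad_int _ j,
    integral_mul_mul_eq_ite hm hW hcov hq hq_top, hcross, sum_ite_eq, mem_univ, if_true,
    ← mul_sum]
  ring

theorem integrableOn_sum_sq_of_norm_le (hZ : ∀ i, AEStronglyMeasurable (fun ω => Z ω i) μ)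
    {A : Set Ω} (hA : MeasurableSet A) {C : ℝ} (hZC : ∀ ω ∈ A, ‖Z ω‖ ≤ C) :
    IntegrableOn (fun ω => ∑ i, Z ω i ^ 2) A μ :=
  integrable_finsetSum _ fun i _ =>
    ((memLp_top_restrict_of_norm_le (hZ i) hA hZC).mono_exponent le_top).integrable_sq

theorem mul_setIntegral_sum_sq_le (hm : m ≤ m0) (hX : MemLp X 2 μ)
    (hW : ∀ i, MemLp (fun ω => W ω i) 2 μ)
    (hcov : ∀ i j, μ[(fun ω => W ω i * W ω j)|m] =ᵐ[μ] fun _ => if i = j then h else 0)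
    (hXW : ∀ i, μ[(fun ω => X ω * W ω i)|m] =ᵐ[μ] fun ω => h * Z ω i)
    (hZ : ∀ i, StronglyMeasurable[m] (fun ω => Z ω i)) {A : Set Ω} (hA : MeasurableSet[m] A)
    {C : ℝ} (hZC : ∀ ω ∈ A, ‖Z ω‖ ≤ C) :
    h * ∫ ω in A, ∑ i, Z ω i ^ 2 ∂μ ≤ ∫ ω, X ω ^ 2 ∂μ := by
  set q : Ω → Fin d → ℝ := fun ω i => A.indicator (fun ω => Z ω i) ω
  have hq : ∀ i, StronglyMeasurable[m] (fun ω => q ω i) := fun i => (hZ i).indicator hA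
  have hq_top : ∀ i, MemLp (fun ω => q ω i) ⊤ μ := fun i =>
    (memLp_indicator_iff_restrict (hm _ hA)).2 <|
      memLp_top_restrict_of_norm_le ((hZ i).mono hm).aestronglyMeasurable (hm _ hA) hZC
  have hqZ : ∀ ω i, q ω i * Z ω i = q ω i ^ 2 := fun ω i => by
    by_cases hω : ω ∈ A <;> simp [q, hω, sq]
  have hq_sq : ∑ i, ∫ ω, q ω i ^ 2 ∂μ = ∫ ω in A, ∑ i, Z ω i ^ 2 ∂μ := by
    rw [← integral_indicator (hm _ hA), ← integral_finsetSum _ fun i _ =>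
      ((hq_top i).mono_exponent le_top).integrable_sq]
    refine integral_congr_ae (.of_forall fun ω => ?_)
    by_cases hω : ω ∈ A <;> simp [q, hω]
  have hnonneg : 0 ≤ ∫ ω, (X ω - ∑ i, q ω i * W ω i) ^ 2 ∂μ :=
    integral_nonneg fun ω => sq_nonneg _
  rw [integral_sq_sub_sum_mul hm hX hW hcov hXW hq hq_top] at hnonneg
  simp only [hqZ, hq_sq] at hnonneg
  linarith

end MeasureTheory

theorem control_process_bound_general
    {Ω : Type*} {m0 : MeasurableSpace Ω} (P : Measure Ω) [IsProbabilityMeasure P]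
    (𝒢 : MeasurableSpace Ω) (h𝒢 : 𝒢 ≤ m0)
    (h : ℝ) (hh : 0 < h) (d : ℕ)
    (Y : Ω → ℝ) (hY : MemLp Y 2 P)
    (ΔW : Ω → Fin d → ℝ)
    (hΔW2 : ∀ i, MemLp (fun ω => ΔW ω i) 2 P)
    (hmean : ∀ i, P[(fun ω => ΔW ω i) | 𝒢] =ᵐ[P] 0)
    (hcov : ∀ i j, P[(fun ω => ΔW ω i * ΔW ω j) | 𝒢]
        =ᵐ[P] fun _ => if i = j then h else 0)
    (Z : Ω → Fin d → ℝ)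
    (hZ : ∀ i, (fun ω => Z ω i)
        = fun ω => h⁻¹ * (P[(fun ω' => Y ω' * ΔW ω' i) | 𝒢]) ω) :
    h * ∫ ω, (∑ i, (Z ω i) ^ 2) ∂P
      ≤ ∫ ω, (Y ω - (P[Y | 𝒢]) ω) ^ 2 ∂P := by
  have hZ_meas : ∀ i, StronglyMeasurable[𝒢] (fun ω => Z ω i) := fun i => by
    rw [hZ i]; exact stronglyMeasurable_condExp.const_mul _
  have hXW : ∀ i, P[(fun ω => (Y ω - P[Y|𝒢] ω) * ΔW ω i)|𝒢] =ᵐ[P] fun ω => h * Z ω i :=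
    fun i => by
      refine (condExp_sub_condExp_mul_ae_eq hY (hΔW2 i) (hmean i)).trans (.of_forall fun ω => ?_)
      simp only [congrFun (hZ i) ω, mul_inv_cancel_left₀ hh.ne']
  -- `𝒢` and `m0` are both local instances, so the σ-algebra of `Ω` is passed explicitly.
  have hZ_norm : Measurable[𝒢] fun ω => ‖Z ω‖ :=
    measurable_norm.comp (@measurable_pi_lambda Ω (Fin d) _ 𝒢 _ Z fun i => (hZ_meas i).measurable)
  have hA : ∀ N : ℕ, MeasurableSet[𝒢] {ω | ‖Z ω‖ ≤ N} := fun N => hZ_norm measurableSet_Iic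
  rw [← le_div_iff₀' hh]
  refine (aecover_le_natCast (hZ_norm.mono h𝒢 le_rfl)).integral_le_of_setIntegral_le
    (fun N => integrableOn_sum_sq_of_norm_le (fun i => ((hZ_meas i).mono h𝒢).aestronglyMeasurable)
      (h𝒢 _ (hA N)) fun ω hω => hω)
    (.of_forall fun ω => by positivity) fun N => (le_div_iff₀' hh).2 ?_
  exact mul_setIntegral_sum_sq_le h𝒢 (hY.sub (hY.condExp one_le_two)) hΔW2 hcov hXW hZ_meas
    (hA N) fun ω hω => hω

/-- The discrete control process `Zⁱ = h⁻¹·E[Y·ΔWⁱ | 𝒢]` built from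
increments with conditional mean zero and conditional covariance `h·I` satisfies
`h·E[|Z|²] ≤ E[(Y − E[Y|𝒢])²]`. -/
theorem control_process_bound
    {Ω : Type*} {m0 : MeasurableSpace Ω} (P : Measure Ω) [IsProbabilityMeasure P]
    (𝒢 : MeasurableSpace Ω) (h𝒢 : 𝒢 ≤ m0)
    (h : ℝ) (hh : 0 < h) (d : ℕ) (hd : 1 ≤ d)
    (Y : Ω → ℝ) (hY : MemLp Y 2 P)
    (ΔW : Ω → Fin d → ℝ)
    (hΔW2 : ∀ i, MemLp (fun ω => ΔW ω i) 2 P)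
    (hmean : ∀ i, P[(fun ω => ΔW ω i) | 𝒢] =ᵐ[P] 0)
    (hcov : ∀ i j, P[(fun ω => ΔW ω i * ΔW ω j) | 𝒢]
        =ᵐ[P] fun _ => if i = j then h else 0)
    (Z : Ω → Fin d → ℝ)
    (hZ : ∀ i, (fun ω => Z ω i)
        = fun ω => h⁻¹ * (P[(fun ω' => Y ω' * ΔW ω' i) | 𝒢]) ω) :
    h * ∫ ω, (∑ i, (Z ω i) ^ 2) ∂P
      ≤ ∫ ω, (Y ω - (P[Y | 𝒢]) ω) ^ 2 ∂P :=
  control_process_bound_general P 𝒢 h𝒢 h hh d Y hY ΔW hΔW2 hmean hcov Z hZ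
end
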